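/- arXiv:0809.2280 — 2 statements merged into one kernel-verified Lean document; each statement's English description precedes it below -/
import Mathlib

section
/- An antisymmetric bivector X on ℝ⁴ is simple (X = a ∧ b for some vectors a,b ∈ ℝ⁴) and satisfies (⋆X)·Û = 0 for a unit vector Û ∈ ℝ⁴ if and only if X = Û ∧ N for some N ∈ ℝ⁴; equivalently, under the self-dual/anti-self-dual decomposition with u ∈ SU(2) corresponding to Û, the condition uX⁺ + X⁻u = 0 holds iff |X⁺| = |X⁻| and X⁻ = −u X⁺ u^{-1} up to sign conventions. -/
open Matrix Complex Finset

noncomputable def σ : Fin 3 → Matrix (Fin 2) (Fin 2) ℂ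
  | 0 => !![0, 1; 1, 0]
  | 1 => !![0, -Complex.I; Complex.I, 0]
  | 2 => !![1, 0; 0, -1]

noncomputable def su2vec (v : Fin 3 → ℝ) : Matrix (Fin 2) (Fin 2) ℂ :=
  ∑ i, (v i : ℂ) • σ i

noncomputable def levi {n m : ℕ} (x : Fin n → Fin m) : ℝ :=
  ∏ p ∈ Finset.univ.filter (fun p : Fin n × Fin n => p.1 < p.2),
    ((((x p.2 : ℕ) : ℤ) - ((x p.1 : ℕ) : ℤ)).sign : ℝ)

noncomputable def eps3 (i j k : Fin 3) : ℝ := levi ![i, j, k]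
noncomputable def eps4 (i j k l : Fin 4) : ℝ := levi ![i, j, k, l]
noncomputable def eps5 (i j k l m : Fin 5) : ℝ := levi ![i, j, k, l, m]

noncomputable def det4 (a b c d : Fin 4 → ℝ) : ℝ := Matrix.det (Matrix.of fun I r => ![a, b, c, d] r I)

noncomputable def tstar (a b c : Fin 4 → ℝ) (I : Fin 4) : ℝ :=
  ∑ J, ∑ K, ∑ L, eps4 I J K L * a J * b K * c L

noncomputable def hodge (X : Matrix (Fin 4) (Fin 4) ℝ) : Matrix (Fin 4) (Fin 4) ℝ :=
  Matrix.of fun I J => (1 / 2) * ∑ K, ∑ L, eps4 I J K L * X K L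

noncomputable def sdPart (X : Matrix (Fin 4) (Fin 4) ℝ) (i : Fin 3) : ℝ :=
  (1 / 2) * (∑ j, ∑ k, eps3 i j k * X j.succ k.succ) + X 0 i.succ

noncomputable def asdPart (X : Matrix (Fin 4) (Fin 4) ℝ) (i : Fin 3) : ℝ :=
  (1 / 2) * (∑ j, ∑ k, eps3 i j k * X j.succ k.succ) - X 0 i.succ

noncomputable def wedgeV (a b : Fin 4 → ℝ) : Matrix (Fin 4) (Fin 4) ℝ :=
  Matrix.of fun I J => a I * b J - a J * b I

/-!
Relative to a unit vector `U`, every bivector splits as `X = U ∧ N + ⋆(U ∧ M)` with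
`N = -X·U` and `M = -(⋆X)·U`; hence `(⋆X)·U = 0` forces `X = U ∧ N`, which is simple, while
`(⋆(U ∧ N))·U = 0` because `ε` is antisymmetric. For the second equivalence, `u` is a unit
quaternion, hence unitary, so `uX⁺ + X⁻u = 0` is the same as `X⁻ = -uX⁺u*`; squaring both sides
and using `su2vec v * su2vec v = |v|² • 1` gives `|X⁻| = |X⁺|`.
-/

lemma hodge_of_transpose_eq_neg {X : Matrix (Fin 4) (Fin 4) ℝ} (hX : Xᵀ = -X) :
    hodge X = !![0, X 2 3, X 3 1, X 1 2; X 3 2, 0, X 0 3, X 2 0;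
      X 1 3, X 3 0, 0, X 0 1; X 2 1, X 0 2, X 1 0, 0] := by
  have h (i j : Fin 4) : X j i = -X i j := by simpa using congrFun (congrFun hX i) j
  have hd (i : Fin 4) : X i i = 0 := CharZero.eq_neg_self_iff.mp (h i i)
  ext I J
  fin_cases I <;> fin_cases J <;>
    simp [hodge, eps4, levi, Finset.prod_filter, Fintype.prod_prod_type, Fin.prod_univ_four,
      Fin.sum_univ_four, Int.sign_eq_one_of_pos, h 2 3, h 3 1, h 1 2, h 0 3, h 2 0, h 0 1, hd] <;>
    ring

lemma wedgeV_transpose (a b : Fin 4 → ℝ) : (wedgeV a b)ᵀ = -wedgeV a b := by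
  ext I J
  simp [wedgeV]

lemma wedgeV_zero_right (a : Fin 4 → ℝ) : wedgeV a 0 = 0 := by
  ext I J
  simp [wedgeV]

lemma hodge_zero : hodge 0 = 0 := by
  ext I J
  simp [hodge]

lemma hodge_wedgeV_mulVec_self (U N : Fin 4 → ℝ) : hodge (wedgeV U N) *ᵥ U = 0 := by
  rw [hodge_of_transpose_eq_neg (wedgeV_transpose U N)]
  ext I
  fin_cases I <;> simp [wedgeV, mulVec, dotProduct, Fin.sum_univ_four] <;> ring

lemma sum_sq_smul_eq_wedgeV_add_hodge {X : Matrix (Fin 4) (Fin 4) ℝ} (hX : Xᵀ = -X)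
    (U : Fin 4 → ℝ) :
    (∑ I, U I ^ 2) • X = wedgeV U (-(X *ᵥ U)) + hodge (wedgeV U (-(hodge X *ᵥ U))) := by
  have h (i j : Fin 4) : X j i = -X i j := by simpa using congrFun (congrFun hX i) j
  have hd (i : Fin 4) : X i i = 0 := CharZero.eq_neg_self_iff.mp (h i i)
  rw [hodge_of_transpose_eq_neg (wedgeV_transpose _ _), hodge_of_transpose_eq_neg hX]
  ext I J
  fin_cases I <;> fin_cases J <;>
    simp [wedgeV, mulVec, dotProduct, Fin.sum_univ_four, h 1 0, h 2 0, h 3 0, h 2 1, h 3 1,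
      h 3 2, hd] <;>
    ring

lemma eq_wedgeV_of_hodge_mulVec_eq_zero {X : Matrix (Fin 4) (Fin 4) ℝ} (hX : Xᵀ = -X)
    {U : Fin 4 → ℝ} (hU : ∑ I, U I ^ 2 = 1) (h : hodge X *ᵥ U = 0) :
    X = wedgeV U (-(X *ᵥ U)) := by
  have hsplit := sum_sq_smul_eq_wedgeV_add_hodge hX U
  rwa [hU, one_smul, h, neg_zero, wedgeV_zero_right, hodge_zero, add_zero] at hsplit

lemma mul_add_mul_eq_zero_iff_of_mem_unitary {R : Type*} [Ring R] [StarMul R] {u : R}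
    (hu : u ∈ unitary R) (P M : R) : u * P + M * u = 0 ↔ M = -(u * P * star u) := by
  constructor
  · intro h
    calc M = M * u * star u := by rw [mul_assoc, Unitary.mul_star_self_of_mem hu, mul_one]
      _ = -(u * P * star u) := by rw [eq_neg_of_add_eq_zero_right h, neg_mul]
  · rintro rfl
    rw [neg_mul, mul_assoc _ (star u), Unitary.star_mul_self_of_mem hu, mul_one, add_neg_cancel]

lemma su2vec_eq (v : Fin 3 → ℝ) :
    su2vec v = !![(v 2 : ℂ), v 0 - v 1 * I; v 0 + v 1 * I, -(v 2 : ℂ)] := by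
  ext i j
  fin_cases i <;> fin_cases j <;> simp [su2vec, σ, Fin.sum_univ_three, sub_eq_add_neg]

lemma star_su2vec (v : Fin 3 → ℝ) : star (su2vec v) = su2vec v := by
  rw [su2vec_eq]
  ext i j
  fin_cases i <;> fin_cases j <;> simp [Matrix.star_apply]; ring

lemma su2vec_mul_self (v : Fin 3 → ℝ) :
    su2vec v * su2vec v = ((∑ i, v i ^ 2 : ℝ) : ℂ) • 1 := by
  rw [su2vec_eq]
  ext i j
  fin_cases i <;> fin_cases j <;> simp [Matrix.mul_apply, Fin.sum_univ_three] <;>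
    ring_nf <;> simp [I_sq]

lemma smul_one_add_I_smul_su2vec_mem_unitary {u₀ : ℝ} {w : Fin 3 → ℝ}
    (h : u₀ ^ 2 + ∑ i, w i ^ 2 = 1) :
    (u₀ : ℂ) • (1 : Matrix (Fin 2) (Fin 2) ℂ) + I • su2vec w ∈ unitary _ := by
  have hc : (u₀ : ℂ) ^ 2 + ((∑ i, w i ^ 2 : ℝ) : ℂ) = 1 := by exact_mod_cast h
  have hstar : star ((u₀ : ℂ) • (1 : Matrix (Fin 2) (Fin 2) ℂ) + I • su2vec w) =
      (u₀ : ℂ) • 1 - I • su2vec w := by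
    simp [star_su2vec, sub_eq_add_neg]
  rw [Matrix.mem_unitaryGroup_iff', hstar]
  simp only [sub_mul, mul_add, smul_mul_smul_comm, one_mul, mul_one, su2vec_mul_self, I_mul_I]
  linear_combination (norm := module) hc • (1 : Matrix (Fin 2) (Fin 2) ℂ)

lemma sum_sq_eq_of_su2vec_eq_neg_conj {u : Matrix (Fin 2) (Fin 2) ℂ} (hu : u ∈ unitary _)
    {p m : Fin 3 → ℝ} (h : su2vec m = -(u * su2vec p * star u)) :
    ∑ i, p i ^ 2 = ∑ i, m i ^ 2 := by
  have hsq : su2vec m * su2vec m = u * (su2vec p * su2vec p) * star u := by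
    calc su2vec m * su2vec m = u * su2vec p * (star u * u) * su2vec p * star u := by
          rw [h]; noncomm_ring
      _ = u * (su2vec p * su2vec p) * star u := by
          rw [Unitary.star_mul_self_of_mem hu, mul_one, mul_assoc u]
  rw [su2vec_mul_self, su2vec_mul_self, mul_smul_comm, mul_one, smul_mul_assoc,
    Unitary.mul_star_self_of_mem hu] at hsq
  exact_mod_cast (smul_left_injective ℂ one_ne_zero hsq).symm

lemma mul_su2vec_add_su2vec_mul_eq_zero_iff {u : Matrix (Fin 2) (Fin 2) ℂ} (hu : u ∈ unitary _)
    (p m : Fin 3 → ℝ) :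
    u * su2vec p + su2vec m * u = 0 ↔
      su2vec m = -(u * su2vec p * star u) ∧ ∑ i, p i ^ 2 = ∑ i, m i ^ 2 := by
  rw [mul_add_mul_eq_zero_iff_of_mem_unitary hu]
  exact ⟨fun h => ⟨h, sum_sq_eq_of_su2vec_eq_neg_conj hu h⟩, And.left⟩

/-- a bivector is simple with (⋆X)·Û = 0 iff X = Û ∧ N; equivalently, in the
self-dual/anti-self-dual picture, uX⁺ + X⁻u = 0 iff X⁻ = −uX⁺u⁻¹ (and then |X⁺| = |X⁻|). -/
theorem stmt4 (X : Matrix (Fin 4) (Fin 4) ℝ) (hXa : Xᵀ = -X)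
    (U : Fin 4 → ℝ) (hU : ∑ I, U I ^ 2 = 1) :
    ((∃ a b : Fin 4 → ℝ, X = wedgeV a b) ∧ (∀ I, ∑ J, hodge X I J * U J = 0) ↔
        ∃ N : Fin 4 → ℝ, X = wedgeV U N) ∧
      ((((U 0 : ℂ) • (1 : Matrix (Fin 2) (Fin 2) ℂ) + Complex.I • su2vec (fun i => U i.succ)) *
            su2vec (sdPart X) +
          su2vec (asdPart X) *
            ((U 0 : ℂ) • (1 : Matrix (Fin 2) (Fin 2) ℂ) + Complex.I • su2vec (fun i => U i.succ)) = 0) ↔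
        (su2vec (asdPart X) =
            -(((U 0 : ℂ) • (1 : Matrix (Fin 2) (Fin 2) ℂ) + Complex.I • su2vec (fun i => U i.succ)) *
                su2vec (sdPart X) *
                star ((U 0 : ℂ) • (1 : Matrix (Fin 2) (Fin 2) ℂ) +
                  Complex.I • su2vec (fun i => U i.succ))) ∧
          ∑ i, sdPart X i ^ 2 = ∑ i, asdPart X i ^ 2)) := by
  refine ⟨⟨fun ⟨_, h⟩ => ⟨_, eq_wedgeV_of_hodge_mulVec_eq_zero hXa hU (funext h)⟩, ?_⟩, ?_⟩
  · rintro ⟨N, rfl⟩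
    exact ⟨⟨U, N, rfl⟩, congrFun (hodge_wedgeV_mulVec_self U N)⟩
  · refine mul_su2vec_add_su2vec_mul_eq_zero_iff
      (smul_one_add_I_smul_su2vec_mem_unitary ?_) _ _
    simpa [Fin.sum_univ_succ] using hU
end

section
/- Under the hypotheses of the gluing lemma (two closed nondegenerate tetrads U_i, U'_i in ℝ⁴ matched along U_0 with identical bivectors εV U_0∧U_i = ε'V' U'_0∧U'_i), the corresponding co-tetrad vectors of the shared tetrahedron agree up to the sign α: E'_{jk} = α E_{jk} for all j,k ∈ {1,…,4}, where E_{jk} = (V/3!) ε_{jk}^{i₁i₂i₃} ⋆(U_{i₁}∧U_{i₂}∧U_{i₃}) and similarly for E'. -/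
open Matrix Complex Finset

/-
Since j, k ≠ 0, a nonzero term of the ε-contraction has exactly one of i₁, i₂, i₃ equal to 0,
and by antisymmetry of ⋆(· ∧ · ∧ ·) it is enough to treat ⋆(U₀ ∧ U_p ∧ U_q) with p, q ≠ 0.
The shear U'_p = αU_p + a_p U₀ only adds multiples of U₀ to the other two legs, so
⋆(U₀ ∧ U'_p ∧ U'_q) = α² ⋆(U₀ ∧ U_p ∧ U_q), and V U₀ = α V' U'₀ then gives
V' ⋆(U'₀ ∧ U'_p ∧ U'_q) = α V ⋆(U₀ ∧ U_p ∧ U_q) term by term.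
-/

lemma levi_eq_prod_Ioi {n m : ℕ} (x : Fin n → Fin m) :
    levi x = ∏ i, ∏ j ∈ Finset.Ioi i, ((((x j : ℕ) : ℤ) - ((x i : ℕ) : ℤ)).sign : ℝ) := by
  rw [levi, Finset.prod_filter, Fintype.prod_prod_type]
  refine Fintype.prod_congr _ _ fun i => ?_
  rw [← Finset.prod_filter, Finset.filter_lt_eq_Ioi]

lemma levi_comp_perm {n m : ℕ} (x : Fin n → Fin m) (σ : Equiv.Perm (Fin n)) :
    levi (x ∘ σ) = σ.sign * levi x := by
  rw [levi_eq_prod_Ioi, levi_eq_prod_Ioi]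
  refine σ.prod_Ioi_comp_eq_sign_mul_prod
    (f := fun i j => ((((x j : ℕ) : ℤ) - ((x i : ℕ) : ℤ)).sign : ℝ)) fun i j => ?_
  rw [← neg_sub, Int.sign_neg, Int.cast_neg]

lemma levi_comp_swap {n m : ℕ} (x : Fin n → Fin m) {i j : Fin n} (h : i ≠ j) :
    levi (x ∘ Equiv.swap i j) = -levi x := by
  rw [levi_comp_perm, Equiv.Perm.sign_swap h]
  simp

lemma levi_eq_zero_of_not_injective {n m : ℕ} {x : Fin n → Fin m}
    (hx : ¬Function.Injective x) : levi x = 0 := by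
  simp only [Function.Injective, not_forall] at hx
  obtain ⟨i, j, hij, hne⟩ := hx
  wlog hlt : i < j generalizing i j
  · exact this j i hij.symm (Ne.symm hne) ((lt_or_gt_of_ne hne).resolve_left hlt)
  exact Finset.prod_eq_zero (i := (i, j)) (by simpa using hlt) (by simp [hij])

lemma eps4_swap₁₂ (I J K L : Fin 4) : eps4 I K J L = -eps4 I J K L := by
  rw [eps4, eps4, ← levi_comp_swap _ (show (1 : Fin 4) ≠ 2 by decide)]
  congr 1; funext r; fin_cases r <;> rfl

lemma eps4_swap₂₃ (I J K L : Fin 4) : eps4 I J L K = -eps4 I J K L := by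
  rw [eps4, eps4, ← levi_comp_swap _ (show (2 : Fin 4) ≠ 3 by decide)]
  congr 1; funext r; fin_cases r <;> rfl

lemma tstar_swap₁₂ (a b c : Fin 4 → ℝ) (I : Fin 4) : tstar b a c I = -tstar a b c I := by
  rw [tstar, tstar, Finset.sum_comm]
  simp only [← Finset.sum_neg_distrib]
  refine Fintype.sum_congr _ _ fun J => Fintype.sum_congr _ _ fun K =>
    Fintype.sum_congr _ _ fun L => ?_
  rw [eps4_swap₁₂]
  ring

lemma tstar_swap₂₃ (a b c : Fin 4 → ℝ) (I : Fin 4) : tstar a c b I = -tstar a b c I := by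
  rw [tstar, tstar]
  simp only [← Finset.sum_neg_distrib]
  refine Fintype.sum_congr _ _ fun J => ?_
  rw [Finset.sum_comm]
  refine Fintype.sum_congr _ _ fun K => Fintype.sum_congr _ _ fun L => ?_
  rw [eps4_swap₂₃]
  ring

lemma tstar_swap₁₃ (a b c : Fin 4 → ℝ) (I : Fin 4) : tstar c b a I = -tstar a b c I := by
  rw [tstar_swap₁₂, tstar_swap₂₃, tstar_swap₁₂, neg_neg]

lemma tstar_self₁₂ (a c : Fin 4 → ℝ) (I : Fin 4) : tstar a a c I = 0 :=
  self_eq_neg.mp (tstar_swap₁₂ a a c I)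

lemma tstar_self₁₃ (a b : Fin 4 → ℝ) (I : Fin 4) : tstar a b a I = 0 :=
  self_eq_neg.mp (tstar_swap₁₃ a b a I)

lemma tstar_smul_left (t : ℝ) (a b c : Fin 4 → ℝ) (I : Fin 4) :
    tstar (t • a) b c I = t * tstar a b c I := by
  simp only [tstar, Finset.mul_sum, Pi.smul_apply, smul_eq_mul]
  refine Fintype.sum_congr _ _ fun J => Fintype.sum_congr _ _ fun K =>
    Fintype.sum_congr _ _ fun L => ?_
  ring

lemma tstar_smul_add_smul_self (u y z : Fin 4 → ℝ) (α s t : ℝ) (I : Fin 4) :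
    tstar u (α • y + s • u) (α • z + t • u) I = α ^ 2 * tstar u y z I := by
  have hexpand : tstar u (α • y + s • u) (α • z + t • u) I =
      α * α * tstar u y z I + α * t * tstar u y u I + s * α * tstar u u z I
        + s * t * tstar u u u I := by
    simp only [tstar, Finset.mul_sum, ← Finset.sum_add_distrib, Pi.add_apply, Pi.smul_apply,
      smul_eq_mul]
    refine Fintype.sum_congr _ _ fun J => Fintype.sum_congr _ _ fun K =>
      Fintype.sum_congr _ _ fun L => ?_
    ring
  rw [hexpand, tstar_self₁₃, tstar_self₁₂, tstar_self₁₂]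
  ring

lemma exactly_one_eq_zero_of_eps5_ne_zero {j k i₁ i₂ i₃ : Fin 5} (hj : j ≠ 0) (hk : k ≠ 0)
    (h : eps5 j k i₁ i₂ i₃ ≠ 0) :
    (i₁ = 0 ∧ i₂ ≠ 0 ∧ i₃ ≠ 0) ∨ (i₂ = 0 ∧ i₁ ≠ 0 ∧ i₃ ≠ 0) ∨ (i₃ = 0 ∧ i₁ ≠ 0 ∧ i₂ ≠ 0) := by
  have hinj : Function.Injective ![j, k, i₁, i₂, i₃] :=
    not_not.mp (mt levi_eq_zero_of_not_injective h)
  have hne : ∀ r s : Fin 5, r ≠ s → ![j, k, i₁, i₂, i₃] r ≠ ![j, k, i₁, i₂, i₃] s :=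
    fun r s => hinj.ne
  obtain ⟨r, hr⟩ := Finite.injective_iff_surjective.mp hinj 0
  fin_cases r
  · exact absurd hr hj
  · exact absurd hr hk
  · exact Or.inl ⟨hr, hr ▸ hne 3 2 (by decide), hr ▸ hne 4 2 (by decide)⟩
  · exact Or.inr (Or.inl ⟨hr, hr ▸ hne 2 3 (by decide), hr ▸ hne 4 3 (by decide)⟩)
  · exact Or.inr (Or.inr ⟨hr, hr ▸ hne 2 4 (by decide), hr ▸ hne 3 4 (by decide)⟩)

section Shear

variable {ι : Type*} {U U' : ι → Fin 4 → ℝ} {i₀ : ι} {α c c' : ℝ} {a : ι → ℝ}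

lemma mul_tstar_eq_of_shear_left (h₀ : c • U i₀ = c' • U' i₀)
    (hrel : ∀ i, i ≠ i₀ → U' i = α • U i + a i • U i₀) {p q : ι} (hp : p ≠ i₀) (hq : q ≠ i₀)
    (I : Fin 4) :
    c' * tstar (U' i₀) (U' p) (U' q) I = α ^ 2 * c * tstar (U i₀) (U p) (U q) I := by
  rw [← tstar_smul_left, ← h₀, hrel p hp, hrel q hq, tstar_smul_left, tstar_smul_add_smul_self]
  ring

lemma mul_tstar_eq_of_shear (h₀ : c • U i₀ = c' • U' i₀)
    (hrel : ∀ i, i ≠ i₀ → U' i = α • U i + a i • U i₀) {i₁ i₂ i₃ : ι}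
    (h : (i₁ = i₀ ∧ i₂ ≠ i₀ ∧ i₃ ≠ i₀) ∨ (i₂ = i₀ ∧ i₁ ≠ i₀ ∧ i₃ ≠ i₀) ∨
      (i₃ = i₀ ∧ i₁ ≠ i₀ ∧ i₂ ≠ i₀)) (I : Fin 4) :
    c' * tstar (U' i₁) (U' i₂) (U' i₃) I = α ^ 2 * c * tstar (U i₁) (U i₂) (U i₃) I := by
  rcases h with ⟨rfl, h₂, h₃⟩ | ⟨rfl, h₁, h₃⟩ | ⟨rfl, h₁, h₂⟩
  · exact mul_tstar_eq_of_shear_left h₀ hrel h₂ h₃ I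
  · rw [tstar_swap₁₂ (U' i₂), tstar_swap₁₂ (U i₂)]
    linear_combination -mul_tstar_eq_of_shear_left h₀ hrel h₁ h₃ I
  · rw [tstar_swap₁₃ (U' i₃), tstar_swap₁₃ (U i₃)]
    linear_combination -mul_tstar_eq_of_shear_left h₀ hrel h₂ h₁ I

end Shear

theorem stmt18_general (U U' : Fin 5 → Fin 4 → ℝ)
    (V V' α : ℝ) (hα : α = 1 ∨ α = -1)
    (hU0 : ∀ I, V * U 0 I = α * (V' * U' 0 I))
    (a : Fin 5 → ℝ)
    (hrel : ∀ i, i ≠ (0 : Fin 5) → U' i = α • U i + a i • U 0) :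
    ∀ j k : Fin 5, j ≠ 0 → k ≠ 0 → ∀ I,
      (V' / 6) * (∑ i1, ∑ i2, ∑ i3, eps5 j k i1 i2 i3 * tstar (U' i1) (U' i2) (U' i3) I) =
        α * ((V / 6) * (∑ i1, ∑ i2, ∑ i3, eps5 j k i1 i2 i3 * tstar (U i1) (U i2) (U i3) I)) := by
  intro j k hj hk I
  have hα2 : α ^ 2 = 1 := by rcases hα with rfl | rfl <;> norm_num
  have h₀ : V • U 0 = (α * V') • U' 0 := funext fun J => by simp [hU0, mul_assoc]
  have hterm : ∀ i₁ i₂ i₃, V' * (eps5 j k i₁ i₂ i₃ * tstar (U' i₁) (U' i₂) (U' i₃) I) =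
      α * V * (eps5 j k i₁ i₂ i₃ * tstar (U i₁) (U i₂) (U i₃) I) := by
    intro i₁ i₂ i₃
    by_cases he : eps5 j k i₁ i₂ i₃ = 0
    · simp [he]
    have h := mul_tstar_eq_of_shear h₀ hrel (exactly_one_eq_zero_of_eps5_ne_zero hj hk he) I
    linear_combination eps5 j k i₁ i₂ i₃ * (α * h - (V' * tstar (U' i₁) (U' i₂) (U' i₃) I -
      α * V * tstar (U i₁) (U i₂) (U i₃) I) * hα2)
  have hsum : V' * (∑ i₁, ∑ i₂, ∑ i₃, eps5 j k i₁ i₂ i₃ * tstar (U' i₁) (U' i₂) (U' i₃) I) =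
      α * V * (∑ i₁, ∑ i₂, ∑ i₃, eps5 j k i₁ i₂ i₃ * tstar (U i₁) (U i₂) (U i₃) I) := by
    simp only [Finset.mul_sum]
    exact Fintype.sum_congr _ _ fun i₁ => Fintype.sum_congr _ _ fun i₂ =>
      Fintype.sum_congr _ _ fun i₃ => hterm i₁ i₂ i₃
  linear_combination hsum / 6

/-- under the gluing-lemma relations the co-tetrad vectors of the shared
tetrahedron agree up to the sign α: E'_{jk} = α E_{jk}. -/
theorem stmt18 (U U' : Fin 5 → Fin 4 → ℝ)
    (hclose : ∑ i, U i = 0) (hclose' : ∑ i, U' i = 0)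
    (hnd : ∀ i : Fin 5, LinearIndependent ℝ (fun j : {j : Fin 5 // j ≠ i} => U j.1))
    (hnd' : ∀ i : Fin 5, LinearIndependent ℝ (fun j : {j : Fin 5 // j ≠ i} => U' j.1))
    (V V' α : ℝ) (hα : α = 1 ∨ α = -1)
    (hV : V⁻¹ = det4 (U 1) (U 2) (U 3) (U 4)) (hVne : V ≠ 0)
    (hV' : V'⁻¹ = det4 (U' 1) (U' 2) (U' 3) (U' 4)) (hV'ne : V' ≠ 0)
    (hU0 : ∀ I, V * U 0 I = α * (V' * U' 0 I))
    (a : Fin 5 → ℝ)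
    (hrel : ∀ i, i ≠ (0 : Fin 5) → U' i = α • U i + a i • U 0)
    (hsum : (∑ i ∈ Finset.univ \ {(0 : Fin 5)}, a i) = α * (1 - V / V')) :
    ∀ j k : Fin 5, j ≠ 0 → k ≠ 0 → ∀ I,
      (V' / 6) * (∑ i1, ∑ i2, ∑ i3, eps5 j k i1 i2 i3 * tstar (U' i1) (U' i2) (U' i3) I) =
        α * ((V / 6) * (∑ i1, ∑ i2, ∑ i3, eps5 j k i1 i2 i3 * tstar (U i1) (U i2) (U i3) I)) :=
  stmt18_general U U' V V' α hα hU0 a hrel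
end
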